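/- Let n ≥ 1. The symmetric canonical elements for the integer lattice ℤ^n of Sp(n) are precisely the elements ξ_I + δ_I(n)H_n, where I ranges over all subsets of {1,…,n}. -/
import Mathlib


/-- The duals of the simple roots of `sp(n)` (1-based index):
`H_i = E_1+⋯+E_i` for `i ≤ n-1` and `H_n = (E_1+⋯+E_n)/2`. -/
noncomputable def Hsp (n i : ℕ) : Fin n → ℝ :=
  if i = n then fun _ => 1 / 2 else fun j => if (j : ℕ) + 1 ≤ i then 1 else 0

/-- The integer lattice `ℤ^n` inside `ℝ^n`. -/
def IntLat (n : ℕ) : Set (Fin n → ℝ) := {v | ∀ j, ∃ m : ℤ, v j = m}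

/-- The set of symmetric canonical elements for a lattice `𝔏 ⊆ ℝ^n`. -/
def SymCanonSet (n : ℕ) (𝔏 : Set (Fin n → ℝ)) (H : ℕ → Fin n → ℝ) :
    Set (Fin n → ℝ) :=
  {ξ | ∃ c : ℕ → ℕ, ξ = ∑ i ∈ Finset.Icc 1 n, c i • H i ∧ ξ ∈ 𝔏 ∧
    ∀ c' : ℕ → ℕ, (∀ i ∈ Finset.Icc 1 n, c' i ≤ c i) →
      (∑ i ∈ Finset.Icc 1 n, c' i • H i) ∈ 𝔏 →
      (ξ - ∑ i ∈ Finset.Icc 1 n, c' i • H i) ∈ (fun v => (2 : ℝ) • v) '' 𝔏 →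
      (∑ i ∈ Finset.Icc 1 n, c' i • H i) = ξ}

/-- `δ_I(m)`. -/
def deltaI (I : Finset ℕ) (m : ℕ) : ℕ := if m ∈ I then 1 else 0

lemma sum_apply' (n : ℕ) (hn : 1 ≤ n) (c : ℕ → ℕ) (j : Fin n) :
    (∑ i ∈ Finset.Icc 1 n, c i • Hsp n i) j
      = (∑ i ∈ Finset.Icc ((j : ℕ) + 1) (n - 1), (c i : ℝ)) + (c n : ℝ) / 2 := by
  have hins : Finset.Icc 1 n = insert n (Finset.Icc 1 (n - 1)) := by
    ext x; simp [Finset.mem_Icc]; omega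
  rw [Finset.sum_apply, hins, Finset.sum_insert (by simp [Finset.mem_Icc]; omega)]
  have h1 : (c n • Hsp n n) j = (c n : ℝ) / 2 := by
    simp [Hsp]; ring
  have h2 : ∑ i ∈ Finset.Icc 1 (n - 1), (c i • Hsp n i) j
      = ∑ i ∈ Finset.Icc ((j : ℕ) + 1) (n - 1), (c i : ℝ) := by
    rw [Finset.sum_congr rfl (g := fun i => if (j : ℕ) + 1 ≤ i then (c i : ℝ) else 0)
      (fun i hi => by
        simp only [Finset.mem_Icc] at hi
        have : i ≠ n := by omega
        simp only [Hsp, if_neg this, Pi.smul_apply, nsmul_eq_mul]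
        split <;> simp)]
    rw [Finset.sum_ite, Finset.sum_const_zero, add_zero]
    apply Finset.sum_congr _ (fun _ _ => rfl)
    ext x; simp [Finset.mem_Icc, Finset.mem_filter]; omega
  rw [h1, h2, add_comm]

lemma coeff_last (n : ℕ) (hn : 1 ≤ n) (c : ℕ → ℕ) :
    (∑ i ∈ Finset.Icc 1 n, c i • Hsp n i) ⟨n - 1, by omega⟩ = (c n : ℝ) / 2 := by
  rw [sum_apply' n hn]
  have : Finset.Icc ((n - 1 : ℕ) + 1) (n - 1) = ∅ := by
    apply Finset.Icc_eq_empty; omega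
  simp [this]

lemma coeff_mid (n : ℕ) (c : ℕ → ℕ) (i : ℕ) (h1 : 1 ≤ i) (h2 : i ≤ n - 1) :
    (∑ k ∈ Finset.Icc 1 n, c k • Hsp n k) ⟨i - 1, by omega⟩
      - (∑ k ∈ Finset.Icc 1 n, c k • Hsp n k) ⟨i, by omega⟩ = (c i : ℝ) := by
  have hn : 1 ≤ n := by omega
  rw [sum_apply' n hn, sum_apply' n hn]
  simp only
  have e1 : (i - 1 : ℕ) + 1 = i := by omega
  rw [e1]
  have hins : Finset.Icc i (n - 1) = insert i (Finset.Icc (i + 1) (n - 1)) := by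
    ext x; simp [Finset.mem_Icc]; omega
  rw [hins, Finset.sum_insert (by simp [Finset.mem_Icc])]
  ring

lemma mem_intlat_iff (n : ℕ) (hn : 1 ≤ n) (c : ℕ → ℕ) :
    (∑ i ∈ Finset.Icc 1 n, c i • Hsp n i) ∈ IntLat n ↔ 2 ∣ c n := by
  constructor
  · intro h
    obtain ⟨m, hm⟩ := h ⟨n - 1, by omega⟩
    rw [coeff_last n hn] at hm
    have : (c n : ℤ) = 2 * m := by
      have : (c n : ℝ) = 2 * m := by linarith
      exact_mod_cast this
    omega
  · rintro ⟨k, hk⟩ j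
    refine ⟨(∑ i ∈ Finset.Icc ((j : ℕ) + 1) (n - 1), (c i : ℤ)) + k, ?_⟩
    rw [sum_apply' n hn, hk]
    push_cast
    ring

lemma coeff_inj (n : ℕ) (hn : 1 ≤ n) (c c' : ℕ → ℕ)
    (h : ∑ i ∈ Finset.Icc 1 n, c i • Hsp n i = ∑ i ∈ Finset.Icc 1 n, c' i • Hsp n i) :
    ∀ i ∈ Finset.Icc 1 n, c i = c' i := by
  intro i hi
  simp only [Finset.mem_Icc] at hi
  rcases eq_or_ne i n with he | hne
  · rw [he]
    have := congrFun h ⟨n - 1, by omega⟩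
    rw [coeff_last n hn, coeff_last n hn] at this
    have : (c n : ℝ) = c' n := by linarith
    exact_mod_cast this
  · have h1 : 1 ≤ i := hi.1
    have h2 : i ≤ n - 1 := by omega
    have e1 := coeff_mid n c i h1 h2
    have e2 := coeff_mid n c' i h1 h2
    have ha := congrFun h ⟨i - 1, by omega⟩
    have hb := congrFun h ⟨i, by omega⟩
    have : (c i : ℝ) = c' i := by rw [← e1, ← e2, ha, hb]
    exact_mod_cast this

-- key rewriting lemma: the canonical-coefficient sum
lemma sum_form (n : ℕ) (hn : 1 ≤ n) (I : Finset ℕ) (hI : I ⊆ Finset.Icc 1 n) :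
    ∑ i ∈ Finset.Icc 1 n,
        (deltaI I i + (if i = n then deltaI I n else 0)) • Hsp n i
      = (∑ i ∈ I, Hsp n i) + deltaI I n • Hsp n n := by
  simp only [add_smul, Finset.sum_add_distrib]
  congr 1
  · have : ∀ i ∈ Finset.Icc 1 n, deltaI I i • Hsp n i
        = if i ∈ I then Hsp n i else 0 := by
      intro i _
      simp only [deltaI]
      split <;> simp
    rw [Finset.sum_congr rfl this, Finset.sum_ite_mem,
      Finset.inter_eq_right.mpr hI]
  · have : ∀ i ∈ Finset.Icc 1 n, (if i = n then deltaI I n else 0) • Hsp n i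
        = if i = n then deltaI I n • Hsp n i else 0 := by
      intro i _; split <;> simp
    rw [Finset.sum_congr rfl this, Finset.sum_ite_eq',
      if_pos (by simp [Finset.mem_Icc]; omega)]

/-- The symmetric canonical elements of `Sp(n)` are precisely the
elements `ξ_I + δ_I(n) H_n`, for `I ⊆ {1,…,n}`. -/
theorem sp_symmetric_canonical (n : ℕ) (hn : 1 ≤ n) :
    SymCanonSet n (IntLat n) (Hsp n) =
      {ξ | ∃ I : Finset ℕ, I ⊆ Finset.Icc 1 n ∧
        ξ = (∑ i ∈ I, Hsp n i) + deltaI I n • Hsp n n} := by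
  ext ξ
  constructor
  · rintro ⟨c, hξ, hmem, hmin⟩
    have hdvd : 2 ∣ c n := (mem_intlat_iff n hn c).1 (hξ ▸ hmem)
    set c' : ℕ → ℕ := fun i => if i = n then c n % 4 else c i % 2 with hc'
    have hle : ∀ i ∈ Finset.Icc 1 n, c' i ≤ c i := by
      intro i _
      simp only [hc']
      split_ifs with h
      · rw [h]; exact Nat.mod_le _ _
      · exact Nat.mod_le _ _
    have hmem' : (∑ i ∈ Finset.Icc 1 n, c' i • Hsp n i) ∈ IntLat n := by
      rw [mem_intlat_iff n hn]
      simp only [hc', if_pos rfl]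
      omega
    set e : ℕ → ℕ := fun i => if i = n then 2 * (c n / 4) else c i / 2 with he
    have himg : (ξ - ∑ i ∈ Finset.Icc 1 n, c' i • Hsp n i)
        ∈ (fun v => (2 : ℝ) • v) '' IntLat n := by
      refine ⟨∑ i ∈ Finset.Icc 1 n, e i • Hsp n i, ?_, ?_⟩
      · rw [mem_intlat_iff n hn]
        simp [he]
      · funext j
        simp only [Pi.smul_apply, Pi.sub_apply, smul_eq_mul]
        rw [hξ, sum_apply' n hn, sum_apply' n hn, sum_apply' n hn]
        have key : ∀ i ∈ Finset.Icc ((j : ℕ) + 1) (n - 1),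
            (2 : ℝ) * (e i : ℝ) = (c i : ℝ) - (c' i : ℝ) := by
          intro i hi
          simp only [Finset.mem_Icc] at hi
          have hin : i ≠ n := by omega
          simp only [he, hc', if_neg hin]
          have h2 : (c i : ℝ) = 2 * ((c i / 2 : ℕ) : ℝ) + ((c i % 2 : ℕ) : ℝ) := by
            exact_mod_cast (Nat.div_add_mod (c i) 2).symm
          linarith
        have keyn : (2 : ℝ) * ((e n : ℕ) : ℝ) / 2 = (c n : ℝ) / 2 - ((c' n : ℕ) : ℝ) / 2 := by
          simp only [he, hc', if_pos rfl]
          have h4 : (c n : ℝ) = 4 * ((c n / 4 : ℕ) : ℝ) + ((c n % 4 : ℕ) : ℝ) := by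
            exact_mod_cast (Nat.div_add_mod (c n) 4).symm
          push_cast
          linarith
        rw [mul_add, Finset.mul_sum, Finset.sum_congr rfl key, Finset.sum_sub_distrib]
        rw [mul_div_assoc] at keyn
        rw [keyn]
        ring
    have heq := hmin c' hle hmem' himg
    rw [hξ] at heq
    have hcc := coeff_inj n hn c' c heq
    have hcb : ∀ i, 1 ≤ i → i ≤ n → i ≠ n → c i ≤ 1 := by
      intro i h1 h2 h3
      have := hcc i (by simp [Finset.mem_Icc]; omega)
      simp only [hc', if_neg h3] at this
      omega
    have hcn : c n = 0 ∨ c n = 2 := by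
      have := hcc n (by simp [Finset.mem_Icc]; omega)
      simp only [hc', if_pos rfl] at this
      omega
    refine ⟨(Finset.Icc 1 n).filter (fun i => c i ≠ 0), Finset.filter_subset _ _, ?_⟩
    rw [hξ]
    rw [← Finset.sum_filter_of_ne (p := fun i => c i ≠ 0)
      (by intro x _ hfx; intro h0; exact hfx (by simp [h0]))]
    have hterm : ∀ i ∈ (Finset.Icc 1 n).filter (fun i => c i ≠ 0),
        c i • Hsp n i = Hsp n i + (if i = n then Hsp n n else 0) := by
      intro i hi
      simp only [Finset.mem_filter, Finset.mem_Icc] at hi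
      rcases eq_or_ne i n with he' | hne
      · rw [he', if_pos rfl]
        have : c n = 2 := by
          rcases hcn with h | h
          · exfalso; rw [he'] at hi; exact hi.2 h
          · exact h
        rw [this]
        rw [show (2 : ℕ) = 1 + 1 by rfl, add_smul, one_smul]
      · rw [if_neg hne]
        have : c i = 1 := by
          have := hcb i hi.1.1 hi.1.2 hne
          omega
        rw [this, one_smul, add_zero]
    rw [Finset.sum_congr rfl hterm, Finset.sum_add_distrib, Finset.sum_ite_eq']
    congr 1
    by_cases hni : n ∈ (Finset.Icc 1 n).filter (fun i => c i ≠ 0)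
    · rw [if_pos hni]
      simp [deltaI, hni]
    · rw [if_neg hni]
      simp [deltaI, hni]
  · rintro ⟨I, hI, hξ⟩
    set c : ℕ → ℕ := fun i => deltaI I i + (if i = n then deltaI I n else 0) with hc
    have hform := sum_form n hn I hI
    have hξc : ξ = ∑ i ∈ Finset.Icc 1 n, c i • Hsp n i := by rw [hξ, hform]
    refine ⟨c, hξc, ?_, ?_⟩
    · rw [hξc, mem_intlat_iff n hn]
      refine ⟨deltaI I n, ?_⟩
      simp only [hc]
      split_ifs <;> ring
    · intro c' hle hmem' himg
      obtain ⟨w, hw, hww⟩ := himg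
      have hwval : ∀ j : Fin n, (2 : ℝ) * w j
          = (∑ i ∈ Finset.Icc 1 n, c i • Hsp n i) j
            - (∑ i ∈ Finset.Icc 1 n, c' i • Hsp n i) j := by
        intro j
        have := congrFun hww j
        simp only [Pi.smul_apply, Pi.sub_apply, smul_eq_mul] at this
        rw [← hξc]
        exact this
      have hcnb : c n ≤ 2 := by simp only [hc, deltaI]; split <;> simp
      have hcib : ∀ i, i ≠ n → c i ≤ 1 := by
        intro i hi; simp only [hc, deltaI, if_neg hi]; split <;> simp
      have key : ∀ i ∈ Finset.Icc 1 n, c' i = c i := by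
        intro i hi
        simp only [Finset.mem_Icc] at hi
        rcases eq_or_ne i n with he' | hne
        · rw [he']
          obtain ⟨m, hm⟩ := hw ⟨n - 1, by omega⟩
          have h2 := hwval ⟨n - 1, by omega⟩
          rw [coeff_last n hn, coeff_last n hn, hm] at h2
          have hz : (c n : ℝ) = (c' n : ℝ) + 4 * (m : ℝ) := by linarith
          have hz' : (c n : ℤ) = (c' n : ℤ) + 4 * m := by exact_mod_cast hz
          have hb1 := hle n (by simp [Finset.mem_Icc]; omega)
          omega
        · have h1 : 1 ≤ i := hi.1
          have h2 : i ≤ n - 1 := by omega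
          obtain ⟨m1, hm1⟩ := hw ⟨i - 1, by omega⟩
          obtain ⟨m2, hm2⟩ := hw ⟨i, by omega⟩
          have e1 := coeff_mid n c i h1 h2
          have e2 := coeff_mid n c' i h1 h2
          have ha := hwval ⟨i - 1, by omega⟩
          have hb := hwval ⟨i, by omega⟩
          rw [hm1] at ha
          rw [hm2] at hb
          have hz : (c i : ℝ) = (c' i : ℝ) + 2 * ((m1 : ℝ) - (m2 : ℝ)) := by
            have := e1
            have := e2
            linarith
          have hz' : (c i : ℤ) = (c' i : ℤ) + 2 * (m1 - m2) := by exact_mod_cast hz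
          have hb1 := hle i (by simp [Finset.mem_Icc]; omega)
          have hb2 := hcib i hne
          omega
      rw [Finset.sum_congr rfl (fun i hi => by rw [key i hi]), ← hξc]
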